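/- arXiv:0806.4359 — 7 statements merged into one kernel-verified Lean document; each statement's English description precedes it below -/
import Mathlib

section
/- For smooth functions g, f : ℝ → ℝ, the vector fields x(g) = g(t) ∂x − g'(t) ∂u and z(f) = f ∂t + (1/6)(2x f' + y² f'') ∂x + (2y/3) f' ∂y + (1/6)(−4u f' − 2x f'' − y² f''') ∂u satisfy [x(g), z(f)] = x(f'g/3 − fg'). -/
abbrev E : Type := ℝ × ℝ × ℝ × ℝ

noncomputable def bracket (X Y : E → E) : E → E :=
  fun p => fderiv ℝ Y p (X p) - fderiv ℝ X p (Y p)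

/-- `x(g) = g(t) ∂x − g'(t) ∂u`. -/
noncomputable def xg (g : ℝ → ℝ) : E → E := fun p => (0, g p.1, 0, -deriv g p.1)

/-- `z(f) = f ∂t + (1/6)(2x f' + y² f'') ∂x + (2y/3) f' ∂y
    + (1/6)(−4u f' − 2x f'' − y² f''') ∂u`. -/
noncomputable def zf (f : ℝ → ℝ) : E → E := fun p =>
  (f p.1,
   (1 / 6) * (2 * p.2.1 * deriv f p.1 + p.2.2.1 ^ 2 * deriv (deriv f) p.1),
   (2 * p.2.2.1 / 3) * deriv f p.1,
   (1 / 6) * (-4 * p.2.2.2 * deriv f p.1 - 2 * p.2.1 * deriv (deriv f) p.1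
      - p.2.2.1 ^ 2 * deriv (deriv (deriv f)) p.1))

noncomputable abbrev Pt : E →L[ℝ] ℝ := ContinuousLinearMap.fst ℝ ℝ (ℝ × ℝ × ℝ)
noncomputable abbrev Px : E →L[ℝ] ℝ :=
  (ContinuousLinearMap.fst ℝ ℝ (ℝ × ℝ)).comp (ContinuousLinearMap.snd ℝ ℝ (ℝ × ℝ × ℝ))
noncomputable abbrev Py : E →L[ℝ] ℝ :=
  ((ContinuousLinearMap.fst ℝ ℝ ℝ).comp (ContinuousLinearMap.snd ℝ ℝ (ℝ × ℝ))).comp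
    (ContinuousLinearMap.snd ℝ ℝ (ℝ × ℝ × ℝ))
noncomputable abbrev Pu : E →L[ℝ] ℝ :=
  ((ContinuousLinearMap.snd ℝ ℝ ℝ).comp (ContinuousLinearMap.snd ℝ ℝ (ℝ × ℝ))).comp
    (ContinuousLinearMap.snd ℝ ℝ (ℝ × ℝ × ℝ))

theorem bracket_xg_zf (g f : ℝ → ℝ) (hg : ContDiff ℝ (⊤ : ℕ∞) g) (hf : ContDiff ℝ (⊤ : ℕ∞) f) :
    bracket (xg g) (zf f) = xg (fun t => deriv f t * g t / 3 - f t * deriv g t) := by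
  have hf' : ContDiff ℝ (⊤ : ℕ∞) f := hf.of_le (by simp)
  have hg' : ContDiff ℝ (⊤ : ℕ∞) g := hg.of_le (by simp)
  have hf1 : ContDiff ℝ (⊤ : ℕ∞) (deriv f) := (contDiff_infty_iff_deriv.mp hf').2
  have hf2 : ContDiff ℝ (⊤ : ℕ∞) (deriv (deriv f)) := (contDiff_infty_iff_deriv.mp hf1).2
  have hf3 : ContDiff ℝ (⊤ : ℕ∞) (deriv (deriv (deriv f))) := (contDiff_infty_iff_deriv.mp hf2).2
  have hg1 : ContDiff ℝ (⊤ : ℕ∞) (deriv g) := (contDiff_infty_iff_deriv.mp hg').2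
  funext p
  have Hc : ∀ (h : ℝ → ℝ), ContDiff ℝ (⊤ : ℕ∞) h →
      HasFDerivAt (fun q : E => h q.1) (deriv h p.1 • Pt) p :=
    fun h hh => ((hh.differentiable (by simp) p.1).hasDerivAt).comp_hasFDerivAt p Pt.hasFDerivAt
  have hX : HasFDerivAt (xg g)
      ((ContinuousLinearMap.prod 0 ((deriv g p.1 • Pt).prod
        (ContinuousLinearMap.prod 0 (-(deriv (deriv g) p.1 • Pt)))))) p := by
    exact (hasFDerivAt_const (0:ℝ) p).prodMk ((Hc g hg').prodMk
      ((hasFDerivAt_const (0:ℝ) p).prodMk (Hc (deriv g) hg1).neg))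
  have hc2 := (((Px.hasFDerivAt.const_mul (2:ℝ)).mul (Hc (deriv f) hf1)).add
      (((hasDerivAt_pow 2 p.2.2.1).comp_hasFDerivAt p Py.hasFDerivAt).mul (Hc (deriv (deriv f)) hf2))).const_mul ((1:ℝ)/6)
  have hc3 := ((Py.hasFDerivAt.const_mul (2:ℝ)).mul_const ((3:ℝ)⁻¹)).mul (Hc (deriv f) hf1)
  have hc4 := ((((Pu.hasFDerivAt.const_mul (-4:ℝ)).mul (Hc (deriv f) hf1)).sub
      ((Px.hasFDerivAt.const_mul (2:ℝ)).mul (Hc (deriv (deriv f)) hf2))).sub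
      (((hasDerivAt_pow 2 p.2.2.1).comp_hasFDerivAt p Py.hasFDerivAt).mul (Hc (deriv (deriv (deriv f))) hf3))).const_mul ((1:ℝ)/6)
  have hZ := (Hc f hf').prodMk (hc2.prodMk (hc3.prodMk hc4))
  have hZ' : HasFDerivAt (zf f) _ p := hZ
  show fderiv ℝ (zf f) p (xg g p) - fderiv ℝ (xg g) p (zf f p) = _
  rw [hZ'.fderiv, hX.fderiv]
  have dfg : deriv (fun t => deriv f t * g t / 3 - f t * deriv g t) p.1 =
      (deriv (deriv f) p.1 * g p.1 + deriv f p.1 * deriv g p.1) / 3 -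
      (deriv f p.1 * deriv g p.1 + f p.1 * deriv (deriv g) p.1) := by
    rw [deriv_fun_sub, deriv_div_const, deriv_fun_mul, deriv_fun_mul]
    · exact hf'.differentiable (by simp) p.1
    · exact hg1.differentiable (by simp) p.1
    · exact hf1.differentiable (by simp) p.1
    · exact hg'.differentiable (by simp) p.1
    · exact (((hf1.differentiable (by simp) p.1).mul (hg'.differentiable (by simp) p.1)).div_const 3)
    · exact (hf'.differentiable (by simp) p.1).mul (hg1.differentiable (by simp) p.1)
  simp only [xg, zf, ContinuousLinearMap.prod_apply, ContinuousLinearMap.add_apply,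
    ContinuousLinearMap.sub_apply, ContinuousLinearMap.smul_apply, ContinuousLinearMap.neg_apply,
    ContinuousLinearMap.comp_apply, ContinuousLinearMap.coe_fst', ContinuousLinearMap.coe_snd',
    ContinuousLinearMap.zero_apply, smul_eq_mul, Prod.mk_sub_mk, dfg]
  refine Prod.ext ?_ (Prod.ext ?_ (Prod.ext ?_ ?_)) <;> ring
end

section
/- For smooth functions f₁, f₂ : ℝ → ℝ, the vector fields z(f₁) and z(f₂), where z(f) = f ∂t + (1/6)(2x f' + y² f'') ∂x + (2y/3) f' ∂y + (1/6)(−4u f' − 2x f'' − y² f''') ∂u, satisfy [z(f₁), z(f₂)] = z(f₁f₂' − f₁'f₂). -/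
lemma contDiff_deriv_of_top {f : ℝ → ℝ} (hf : ContDiff ℝ (⊤ : ℕ∞) f) :
    ContDiff ℝ (⊤ : ℕ∞) (deriv f) :=
  (contDiff_infty_iff_deriv.mp hf).2

open ContinuousLinearMap in
lemma fderiv_zf_apply (f : ℝ → ℝ) (hf : ContDiff ℝ (⊤ : ℕ∞) f) (p v : E) :
    fderiv ℝ (zf f) p v =
      (deriv f p.1 * v.1,
       (1/6) * (2 * v.2.1 * deriv f p.1 + 2 * p.2.1 * deriv (deriv f) p.1 * v.1
          + 2 * p.2.2.1 * v.2.2.1 * deriv (deriv f) p.1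
          + p.2.2.1 ^ 2 * deriv (deriv (deriv f)) p.1 * v.1),
       (2 * v.2.2.1 / 3) * deriv f p.1 + (2 * p.2.2.1 / 3) * deriv (deriv f) p.1 * v.1,
       (1/6) * (-4 * v.2.2.2 * deriv f p.1 - 4 * p.2.2.2 * deriv (deriv f) p.1 * v.1
          - 2 * v.2.1 * deriv (deriv f) p.1 - 2 * p.2.1 * deriv (deriv (deriv f)) p.1 * v.1
          - 2 * p.2.2.1 * v.2.2.1 * deriv (deriv (deriv f)) p.1
          - p.2.2.1 ^ 2 * deriv (deriv (deriv (deriv f))) p.1 * v.1)) := by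
  have hf1 := contDiff_deriv_of_top hf
  have hf2 := contDiff_deriv_of_top hf1
  have hf3 := contDiff_deriv_of_top hf2
  have ht : HasFDerivAt (fun p : E => p.1) (fst ℝ ℝ (ℝ × ℝ × ℝ)) p := hasFDerivAt_fst
  have hx : HasFDerivAt (fun p : E => p.2.1)
      ((fst ℝ ℝ (ℝ × ℝ)).comp (snd ℝ ℝ (ℝ × ℝ × ℝ))) p :=
    hasFDerivAt_fst.comp p hasFDerivAt_snd
  have hy : HasFDerivAt (fun p : E => p.2.2.1)
      (((fst ℝ ℝ ℝ).comp (snd ℝ ℝ (ℝ × ℝ))).comp (snd ℝ ℝ (ℝ × ℝ × ℝ))) p :=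
    (hasFDerivAt_fst.comp p.2 hasFDerivAt_snd).comp p hasFDerivAt_snd
  have hu : HasFDerivAt (fun p : E => p.2.2.2)
      (((snd ℝ ℝ ℝ).comp (snd ℝ ℝ (ℝ × ℝ))).comp (snd ℝ ℝ (ℝ × ℝ × ℝ))) p :=
    (hasFDerivAt_snd.comp p.2 hasFDerivAt_snd).comp p hasFDerivAt_snd
  have hysq : HasFDerivAt (fun p : E => p.2.2.1 ^ 2) _ p :=
    (hasDerivAt_pow 2 p.2.2.1).comp_hasFDerivAt (h₂ := fun y : ℝ => y ^ 2) p hy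
  have hF0 : HasFDerivAt (fun p : E => f p.1) _ p :=
    ((hf.differentiable (by simp) p.1).hasDerivAt).comp_hasFDerivAt p ht
  have hF1 : HasFDerivAt (fun p : E => deriv f p.1) _ p :=
    ((hf1.differentiable (by simp) p.1).hasDerivAt).comp_hasFDerivAt p ht
  have hF2 : HasFDerivAt (fun p : E => deriv (deriv f) p.1) _ p :=
    ((hf2.differentiable (by simp) p.1).hasDerivAt).comp_hasFDerivAt p ht
  have hF3 : HasFDerivAt (fun p : E => deriv (deriv (deriv f)) p.1) _ p :=
    ((hf3.differentiable (by simp) p.1).hasDerivAt).comp_hasFDerivAt p ht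
  have hc2 : HasFDerivAt
      (fun p : E => (1 / 6) * (2 * p.2.1 * deriv f p.1 + p.2.2.1 ^ 2 * deriv (deriv f) p.1)) _ p :=
    (((hx.const_mul 2).mul hF1).add (hysq.mul hF2)).const_mul (1 / 6)
  have hc3 : HasFDerivAt (fun p : E => (2 * p.2.2.1 / 3) * deriv f p.1) _ p :=
    ((hy.const_mul 2).mul_const ((3:ℝ)⁻¹)).mul hF1
  have hc4 : HasFDerivAt
      (fun p : E => (1 / 6) * (-4 * p.2.2.2 * deriv f p.1 - 2 * p.2.1 * deriv (deriv f) p.1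
        - p.2.2.1 ^ 2 * deriv (deriv (deriv f)) p.1)) _ p :=
    ((((hu.const_mul (-4)).mul hF1).sub ((hx.const_mul 2).mul hF2)).sub
      (hysq.mul hF3)).const_mul (1 / 6)
  have hz : HasFDerivAt (zf f) _ p := hF0.prodMk (hc2.prodMk (hc3.prodMk hc4))
  rw [hz.fderiv]
  simp only [prod_apply, add_apply, sub_apply, smul_apply, comp_apply, coe_fst', coe_snd',
    coe_smul', Pi.smul_apply, smul_eq_mul]
  refine Prod.ext ?_ (Prod.ext ?_ (Prod.ext ?_ ?_)) <;> simp <;> ring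

theorem bracket_zf_zf (f₁ f₂ : ℝ → ℝ) (h1 : ContDiff ℝ (⊤ : ℕ∞) f₁) (h2 : ContDiff ℝ (⊤ : ℕ∞) f₂) :
    bracket (zf f₁) (zf f₂) = zf (fun t => f₁ t * deriv f₂ t - deriv f₁ t * f₂ t) := by
  have h1 : ContDiff ℝ (⊤ : ℕ∞) f₁ := h1.of_le (by simp)
  have h2 : ContDiff ℝ (⊤ : ℕ∞) f₂ := h2.of_le (by simp)
  have h1' := contDiff_deriv_of_top h1
  have h1'' := contDiff_deriv_of_top h1'
  have h1''' := contDiff_deriv_of_top h1''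
  have h2' := contDiff_deriv_of_top h2
  have h2'' := contDiff_deriv_of_top h2'
  have h2''' := contDiff_deriv_of_top h2''
  have D : ∀ g : ℝ → ℝ, ContDiff ℝ (⊤ : ℕ∞) g → ∀ t, DifferentiableAt ℝ g t :=
    fun g hg t => (hg.differentiable (by simp)) t
  set F : ℝ → ℝ := fun t => f₁ t * deriv f₂ t - deriv f₁ t * f₂ t with hFdef
  have d1 : deriv F = fun t => f₁ t * deriv (deriv f₂) t - deriv (deriv f₁) t * f₂ t := by
    funext t
    rw [hFdef, deriv_fun_sub ((D _ h1 t).fun_mul (D _ h2' t)) ((D _ h1' t).fun_mul (D _ h2 t)),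
      deriv_fun_mul (D _ h1 t) (D _ h2' t), deriv_fun_mul (D _ h1' t) (D _ h2 t)]
    ring
  have d2 : deriv (deriv F) = fun t =>
      deriv f₁ t * deriv (deriv f₂) t + f₁ t * deriv (deriv (deriv f₂)) t
        - deriv (deriv (deriv f₁)) t * f₂ t - deriv (deriv f₁) t * deriv f₂ t := by
    funext t
    rw [d1, deriv_fun_sub ((D _ h1 t).fun_mul (D _ h2'' t)) ((D _ h1'' t).fun_mul (D _ h2 t)),
      deriv_fun_mul (D _ h1 t) (D _ h2'' t), deriv_fun_mul (D _ h1'' t) (D _ h2 t)]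
    ring
  have d3 : deriv (deriv (deriv F)) = fun t =>
      2 * deriv f₁ t * deriv (deriv (deriv f₂)) t + f₁ t * deriv (deriv (deriv (deriv f₂))) t
        - deriv (deriv (deriv (deriv f₁))) t * f₂ t
        - 2 * deriv (deriv (deriv f₁)) t * deriv f₂ t := by
    funext t
    rw [d2]
    rw [deriv_fun_sub (((((D _ h1' t).fun_mul (D _ h2'' t)).fun_add ((D _ h1 t).fun_mul (D _ h2''' t))).fun_sub
        ((D _ h1''' t).fun_mul (D _ h2 t))) ) ((D _ h1'' t).fun_mul (D _ h2' t)),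
      deriv_fun_sub (((D _ h1' t).fun_mul (D _ h2'' t)).fun_add ((D _ h1 t).fun_mul (D _ h2''' t)))
        ((D _ h1''' t).fun_mul (D _ h2 t)),
      deriv_fun_add ((D _ h1' t).fun_mul (D _ h2'' t)) ((D _ h1 t).fun_mul (D _ h2''' t)),
      deriv_fun_mul (D _ h1' t) (D _ h2'' t), deriv_fun_mul (D _ h1 t) (D _ h2''' t),
      deriv_fun_mul (D _ h1''' t) (D _ h2 t), deriv_fun_mul (D _ h1'' t) (D _ h2' t)]
    ring
  funext p
  show fderiv ℝ (zf f₂) p (zf f₁ p) - fderiv ℝ (zf f₁) p (zf f₂ p) = zf F p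
  rw [fderiv_zf_apply f₂ h2, fderiv_zf_apply f₁ h1]
  simp only [zf, Prod.mk_sub_mk]
  rw [d3, d2, d1]
  simp only [hFdef, Prod.mk.injEq]
  refine ⟨?_, ?_, ?_, ?_⟩ <;> ring
end

section
/- Let w : ℝ → ℝ be twice differentiable and define u(t,x,y) = x·w(y²/x) for x ≠ 0, with z = y²/x. Then u satisfies the Zabolotskaya–Khokhlov equation u_{xt} − (u u_x)_x − u_{yy} = 0 at a point with x ≠ 0 if and only if w satisfies the reduced ODE −w(z)² + 2(w(z)z − 1)w'(z) − z²w'(z)² − (4z + w(z)z²)w''(z) = 0 at z = y²/x. -/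
/-!
With `z = y²/x` and `u = x w(z)`, one has `u_x = w - z w'` and `u_xx = z² w'' / x`, hence
`(u u_x)_x = (w - z w')² + z² w w''`, while `u_yy = 2 w' + 4 z w''` and `u_xt = 0` since `u` does
not depend on `t`. The left side of the ZK equation is then identically the left side of the
reduced ODE.
-/

/-- The Zabolotskaya–Khokhlov equation `u_{xt} − (u u_x)_x − u_{yy} = 0`
at the point `(t,x,y)`. -/
noncomputable def ZK (u : ℝ → ℝ → ℝ → ℝ) (t x y : ℝ) : Prop :=
  deriv (fun x' => deriv (fun t' => u t' x' y) t) x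
    - deriv (fun x' => u t x' y * deriv (fun x'' => u t x'' y) x') x
    - deriv (fun y' => deriv (fun y'' => u t x y'') y') y = 0

section

variable {w : ℝ → ℝ} {c x y : ℝ}

theorem hasDerivAt_const_div_id (c : ℝ) (hx : x ≠ 0) :
    HasDerivAt (fun s : ℝ => c / s) (-c / x ^ 2) x := by
  simpa [div_eq_mul_inv, neg_div] using (hasDerivAt_inv hx).const_mul c

theorem hasDerivAt_mul_comp_const_div (hw : DifferentiableAt ℝ w (c / x)) (hx : x ≠ 0) :
    HasDerivAt (fun s => s * w (c / s)) (w (c / x) - c / x * deriv w (c / x)) x :=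
  ((hasDerivAt_id x).mul (hw.hasDerivAt.comp x (hasDerivAt_const_div_id c hx))).congr_deriv
    (by simp only [Function.comp_apply, id]; field_simp; ring)

theorem deriv_mul_comp_const_div_eventuallyEq (hw : Differentiable ℝ w) (hx : x ≠ 0) :
    deriv (fun s => s * w (c / s)) =ᶠ[nhds x] fun s => w (c / s) - c / s * deriv w (c / s) := by
  filter_upwards [isOpen_ne.mem_nhds hx] with s hs
  exact (hasDerivAt_mul_comp_const_div (hw _) hs).deriv

theorem hasDerivAt_sub_mul_deriv_comp_const_div (hw : DifferentiableAt ℝ w (c / x))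
    (hw' : DifferentiableAt ℝ (deriv w) (c / x)) (hx : x ≠ 0) :
    HasDerivAt (fun s => w (c / s) - c / s * deriv w (c / s))
      ((c / x) ^ 2 * deriv (deriv w) (c / x) / x) x := by
  have hz := hasDerivAt_const_div_id c hx
  exact ((hw.hasDerivAt.comp x hz).sub (hz.mul (hw'.hasDerivAt.comp x hz))).congr_deriv
    (by simp only [Function.comp_apply]; field_simp; ring)

theorem deriv_mul_comp_const_div_mul_deriv (hw : Differentiable ℝ w)
    (hw' : Differentiable ℝ (deriv w)) (hx : x ≠ 0) :
    deriv (fun s => s * w (c / s) * deriv (fun r => r * w (c / r)) s) x =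
      (w (c / x) - c / x * deriv w (c / x)) ^ 2
        + (c / x) ^ 2 * w (c / x) * deriv (deriv w) (c / x) := by
  have hprod := (hasDerivAt_mul_comp_const_div (hw (c / x)) hx).fun_mul
    (hasDerivAt_sub_mul_deriv_comp_const_div (hw (c / x)) (hw' (c / x)) hx)
  rw [(hprod.congr_of_eventuallyEq ?_).deriv]
  · field_simp
  · exact (deriv_mul_comp_const_div_eventuallyEq (c := c) hw hx).mono fun s hs => by
      simp only [hs]

theorem hasDerivAt_sq_div_const (x y : ℝ) : HasDerivAt (fun y => y ^ 2 / x) (2 * y / x) y := by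
  simpa using (hasDerivAt_pow 2 y).div_const x

theorem hasDerivAt_mul_comp_sq_div (hw : DifferentiableAt ℝ w (y ^ 2 / x)) (hx : x ≠ 0) :
    HasDerivAt (fun y => x * w (y ^ 2 / x)) (2 * y * deriv w (y ^ 2 / x)) y :=
  ((hw.hasDerivAt.comp y (hasDerivAt_sq_div_const x y)).const_mul x).congr_deriv
    (by field_simp)

theorem deriv_deriv_mul_comp_sq_div (hw : Differentiable ℝ w) (hw' : Differentiable ℝ (deriv w))
    (hx : x ≠ 0) :
    deriv (fun y => deriv (fun y' => x * w (y' ^ 2 / x)) y) y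
      = 2 * deriv w (y ^ 2 / x) + 4 * (y ^ 2 / x) * deriv (deriv w) (y ^ 2 / x) := by
  have hfirst : (fun y => deriv (fun y' => x * w (y' ^ 2 / x)) y)
      = fun y => 2 * y * deriv w (y ^ 2 / x) :=
    funext fun y => (hasDerivAt_mul_comp_sq_div (hw _) hx).deriv
  have hsecond : HasDerivAt (fun y => 2 * y * deriv w (y ^ 2 / x))
      (2 * 1 * deriv w (y ^ 2 / x) + 2 * y * (deriv (deriv w) (y ^ 2 / x) * (2 * y / x))) y :=
    ((hasDerivAt_id' y).const_mul 2).mul ((hw' _).hasDerivAt.comp y (hasDerivAt_sq_div_const x y))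
  rw [hfirst, hsecond.deriv]
  ring

end

theorem reduction_L21 (w : ℝ → ℝ) (hw : ContDiff ℝ 2 w)
    (t x y : ℝ) (hx : x ≠ 0) :
    ZK (fun _ x y => x * w (y ^ 2 / x)) t x y ↔
      (fun z =>
        -(w z) ^ 2 + 2 * (w z * z - 1) * deriv w z - z ^ 2 * (deriv w z) ^ 2
          - (4 * z + w z * z ^ 2) * deriv (deriv w) z = 0) (y ^ 2 / x) := by
  have hw₁ : Differentiable ℝ w := hw.differentiable two_ne_zero
  have hw₂ : Differentiable ℝ (deriv w) := hw.differentiable_deriv_two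
  simp only [ZK, deriv_const', deriv_mul_comp_const_div_mul_deriv hw₁ hw₂ hx,
    deriv_deriv_mul_comp_sq_div hw₁ hw₂ hx]
  exact Iff.of_eq (congrArg (· = 0) (by ring))
end

section
/- Let k0 ≠ 0 and c₃ be real constants, let w : ℝ → ℝ be twice differentiable, and define u(t,x,y) = w(z)/(c₃ + 6k₀t)^{1/3} with z = (c₃ + 6k₀t)⁵/y⁶, on a region where c₃ + 6k₀t > 0 and y ≠ 0. Then u satisfies the ZK equation u_{xt} − (u u_x)_x − u_{yy} = 0 if and only if w satisfies 7w'(z) + 6z·w''(z) = 0 at the corresponding z. -/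
open Filter Topology

lemma ZK_iff_deriv_deriv_eq_zero_of_const_x (v : ℝ → ℝ → ℝ) (t x y : ℝ) :
    ZK (fun t _ y => v t y) t x y ↔ deriv (fun y' => deriv (fun y'' => v t y'') y') y = 0 := by
  simp only [ZK, deriv_const', mul_zero, sub_self, zero_sub, neg_eq_zero]

lemma deriv_deriv_div_const (f : ℝ → ℝ) (B y : ℝ) :
    deriv (fun y' => deriv (fun y'' => f y'' / B) y') y = deriv (deriv f) y / B := by
  simp only [deriv_div_const]

lemma hasDerivAt_const_div_pow (A : ℝ) (n : ℕ) {y : ℝ} (hy : y ≠ 0) :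
    HasDerivAt (fun s => A / s ^ n) (-(n * A) / y ^ (n + 1)) y := by
  refine (((hasDerivAt_pow n y).inv (pow_ne_zero n hy)).const_mul A).congr_deriv ?_
  rcases n with _ | n
  · simp
  · rw [Nat.add_sub_cancel]
    field_simp
    ring

lemma hasDerivAt_deriv_comp {w g g' : ℝ → ℝ} {y g'' : ℝ} (hw : Differentiable ℝ w)
    (hw' : DifferentiableAt ℝ (deriv w) (g y)) (hg : ∀ᶠ y' in 𝓝 y, HasDerivAt g (g' y') y')
    (hg' : HasDerivAt g' g'' y) :
    HasDerivAt (deriv fun y' => w (g y'))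
      (deriv (deriv w) (g y) * g' y * g' y + deriv w (g y) * g'') y := by
  have hfirst : (deriv fun y' => w (g y')) =ᶠ[𝓝 y] fun y' => deriv w (g y') * g' y' := by
    filter_upwards [hg] with y' hy' using ((hw (g y')).hasDerivAt.comp y' hy').deriv
  refine HasDerivAt.congr_of_eventuallyEq ?_ hfirst
  exact (hw'.hasDerivAt.comp y hg.self_of_nhds).mul hg'

theorem reduction_L25_general (k₀ c₃ : ℝ) (w : ℝ → ℝ) (hw : ContDiff ℝ 2 w)
    (t x y : ℝ) (ht : c₃ + 6 * k₀ * t > 0) (hy : y ≠ 0) :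
    ZK (fun t _ y => w ((c₃ + 6 * k₀ * t) ^ (5 : ℕ) / y ^ (6 : ℕ))
          / (c₃ + 6 * k₀ * t) ^ ((1 : ℝ) / 3)) t x y ↔
      (fun z => 7 * deriv w z + 6 * z * deriv (deriv w) z = 0)
        ((c₃ + 6 * k₀ * t) ^ (5 : ℕ) / y ^ (6 : ℕ)) := by
  set A := (c₃ + 6 * k₀ * t) ^ (5 : ℕ)
  set B := (c₃ + 6 * k₀ * t) ^ ((1 : ℝ) / 3)
  have hA : 0 < A := pow_pos ht 5
  have hB : 0 < B := Real.rpow_pos_of_pos ht _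
  have hw' : Differentiable ℝ (deriv w) := (hw.iterate_deriv' 1 1).differentiable (by norm_num)
  have hyy := hasDerivAt_deriv_comp (hw.differentiable (by norm_num)) (hw' _)
    (eventually_ne_nhds hy |>.mono fun y' hy' => hasDerivAt_const_div_pow A 6 hy')
    (hasDerivAt_const_div_pow (-(6 * A)) 7 hy)
  rw [ZK_iff_deriv_deriv_eq_zero_of_const_x, deriv_deriv_div_const, hyy.deriv]
  have hfactor : deriv (deriv w) (A / y ^ 6) * (-(6 * A) / y ^ 7) * (-(6 * A) / y ^ 7)
        + deriv w (A / y ^ 6) * (7 * (6 * A) / y ^ 8)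
      = 6 * A / y ^ 8 * (7 * deriv w (A / y ^ 6) + 6 * (A / y ^ 6) * deriv (deriv w) (A / y ^ 6)) := by
    field_simp
    ring
  simp only [Nat.cast_ofNat, Nat.reduceAdd, mul_neg, neg_neg]
  rw [hfactor, div_eq_zero_iff, or_iff_left hB.ne', mul_eq_zero,
    or_iff_right (div_ne_zero (by positivity) (pow_ne_zero 8 hy))]

theorem reduction_L25 (k₀ c₃ : ℝ) (hk : k₀ ≠ 0) (w : ℝ → ℝ) (hw : ContDiff ℝ 2 w)
    (t x y : ℝ) (ht : c₃ + 6 * k₀ * t > 0) (hy : y ≠ 0) :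
    ZK (fun t _ y => w ((c₃ + 6 * k₀ * t) ^ (5 : ℕ) / y ^ (6 : ℕ))
          / (c₃ + 6 * k₀ * t) ^ ((1 : ℝ) / 3)) t x y ↔
      (fun z => 7 * deriv w z + 6 * z * deriv (deriv w) z = 0)
        ((c₃ + 6 * k₀ * t) ^ (5 : ℕ) / y ^ (6 : ℕ)) :=
  reduction_L25_general k₀ c₃ w hw t x y ht hy
end

section
/- Let k₀, c₃ be real constants with k₀² + c₃² ≠ 0, let w be twice differentiable, and define u(t,x,y) = w(z)/(c₃ + k₀t)² with z = x(c₃ + k₀t), on a region where c₃ + k₀t ≠ 0. Then u satisfies the ZK equation u_{xt} − (u u_x)_x − u_{yy} = 0 if and only if w satisfies k₀w'(z) + w'(z)² + (w(z) − z·k₀)w''(z) = 0 at the corresponding z. -/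
/-! With `a = c₃ + k₀ t` and `z = x a`, each `x`-derivative of a function of `z` divided by a
power of `a` brings down one factor `a`. Hence `u_{xt} = k₀ (z w'' − w') / a²`,
`(u u_x)_x = (w'² + w w'') / a²` and `u_{yy} = 0`, so the ZK expression equals
`−(k₀ w' + w'² + (w − k₀ z) w'') / a²`, which vanishes exactly when the reduced ODE holds. -/

section Scaling

variable {𝕜 : Type*} [NontriviallyNormedField 𝕜] {w : 𝕜 → 𝕜}

theorem deriv_comp_mul_const (f : 𝕜 → 𝕜) (a x : 𝕜) :
    deriv (fun x => f (x * a)) x = deriv f (x * a) * a := by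
  simpa [mul_comm] using deriv_comp_mul_left a f x

theorem hasDerivAt_comp_mul_div_sq {a : 𝕜 → 𝕜} {a' t : 𝕜} (x : 𝕜) (ha : HasDerivAt a a' t)
    (h0 : a t ≠ 0) (hw : DifferentiableAt 𝕜 w (x * a t)) :
    HasDerivAt (fun s => w (x * a s) / a s ^ 2)
      (a' * (x * a t * deriv w (x * a t) - 2 * w (x * a t)) / a t ^ 3) t := by
  have hnum : HasDerivAt (fun s => w (x * a s)) (deriv w (x * a t) * (x * a')) t :=
    hw.hasDerivAt.comp t (ha.const_mul x)
  refine (hnum.fun_div (ha.fun_pow 2) (pow_ne_zero 2 h0)).congr_deriv ?_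
  push_cast
  field_simp

theorem deriv_deriv_comp_mul_div_sq {a : 𝕜 → 𝕜} {a' t : 𝕜} (x : 𝕜) (ha : HasDerivAt a a' t)
    (h0 : a t ≠ 0) (hw : Differentiable 𝕜 w) (hw' : DifferentiableAt 𝕜 (deriv w) (x * a t)) :
    deriv (fun x' => deriv (fun s => w (x' * a s) / a s ^ 2) t) x
      = a' * (x * a t * deriv (deriv w) (x * a t) - deriv w (x * a t)) / a t ^ 2 := by
  have hinner : (fun x' => deriv (fun s => w (x' * a s) / a s ^ 2) t)
      = fun x' => (fun z => a' * (z * deriv w z - 2 * w z)) (x' * a t) / a t ^ 3 := by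
    funext x'
    rw [(hasDerivAt_comp_mul_div_sq x' ha h0 (hw _)).deriv]
  have hprofile : HasDerivAt (fun z => a' * (z * deriv w z - 2 * w z))
      (a' * (1 * deriv w (x * a t) + x * a t * deriv (deriv w) (x * a t)
        - 2 * deriv w (x * a t))) (x * a t) :=
    (((hasDerivAt_id _).mul hw'.hasDerivAt).sub ((hw _).hasDerivAt.const_mul 2)).const_mul a'
  rw [hinner, deriv_div_const, deriv_comp_mul_const (fun z => a' * (z * deriv w z - 2 * w z)),
    hprofile.deriv]
  field_simp
  ring

theorem deriv_mul_deriv_comp_mul_div_sq {a x : 𝕜} (ha : a ≠ 0)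
    (hw : DifferentiableAt 𝕜 w (x * a)) (hw' : DifferentiableAt 𝕜 (deriv w) (x * a)) :
    deriv (fun x' => w (x' * a) / a ^ 2 * deriv (fun x'' => w (x'' * a) / a ^ 2) x') x
      = (deriv w (x * a) ^ 2 + w (x * a) * deriv (deriv w) (x * a)) / a ^ 2 := by
  have hflux : (fun x' => w (x' * a) / a ^ 2 * deriv (fun x'' => w (x'' * a) / a ^ 2) x')
      = fun x' => (fun z => w z * deriv w z) (x' * a) / a ^ 3 := by
    funext x'
    rw [deriv_div_const, deriv_comp_mul_const]
    field_simp
  rw [hflux, deriv_div_const, deriv_comp_mul_const (fun z => w z * deriv w z),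
    (hw.hasDerivAt.fun_mul hw'.hasDerivAt).deriv]
  field_simp

end Scaling

theorem ZK_const_in_y_iff (v : ℝ → ℝ → ℝ) (t x y : ℝ) :
    ZK (fun t x _ => v t x) t x y ↔
      deriv (fun x' => deriv (fun t' => v t' x') t) x
        - deriv (fun x' => v t x' * deriv (fun x'' => v t x'') x') x = 0 := by
  simp [ZK]

theorem reduction_L27_general (k₀ c₃ : ℝ)
    (w : ℝ → ℝ) (hw : ContDiff ℝ 2 w)
    (t x y : ℝ) (ht : c₃ + k₀ * t ≠ 0) :
    ZK (fun t x _ => w (x * (c₃ + k₀ * t)) / (c₃ + k₀ * t) ^ 2) t x y ↔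
      (fun z => k₀ * deriv w z + (deriv w z) ^ 2
          + (w z - z * k₀) * deriv (deriv w) z = 0) (x * (c₃ + k₀ * t)) := by
  have hw1 : Differentiable ℝ w := hw.differentiable two_ne_zero
  have hw2 : Differentiable ℝ (deriv w) := hw.differentiable_deriv_two
  have ha : HasDerivAt (fun s => c₃ + k₀ * s) k₀ t := by
    simpa using ((hasDerivAt_id t).const_mul k₀).const_add c₃
  rw [ZK_const_in_y_iff, deriv_deriv_comp_mul_div_sq x ha ht hw1 (hw2 _),
    deriv_mul_deriv_comp_mul_div_sq ht (hw1 _) (hw2 _), ← sub_div,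
    div_eq_zero_iff, or_iff_left (pow_ne_zero 2 ht)]
  constructor <;> intro h <;> linarith

theorem reduction_L27 (k₀ c₃ : ℝ) (hk : k₀ ^ 2 + c₃ ^ 2 ≠ 0)
    (w : ℝ → ℝ) (hw : ContDiff ℝ 2 w)
    (t x y : ℝ) (ht : c₃ + k₀ * t ≠ 0) :
    ZK (fun t x _ => w (x * (c₃ + k₀ * t)) / (c₃ + k₀ * t) ^ 2) t x y ↔
      (fun z => k₀ * deriv w z + (deriv w z) ^ 2
          + (w z - z * k₀) * deriv (deriv w) z = 0) (x * (c₃ + k₀ * t)) :=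
  reduction_L27_general k₀ c₃ w hw t x y ht
end

section
/- Let w : ℝ → ℝ be twice differentiable and define u(t,x,y) = x·w(t). Then u satisfies the ZK equation u_{xt} − (u u_x)_x − u_{yy} = 0 if and only if w satisfies the Riccati equation w(t)² − w'(t) = 0 for all t. -/
/-! For `u = x w(t)` one has `u_{xt} = w'`, `u u_x = x w²` so `(u u_x)_x = w²`, and `u_{yy} = 0`;
the ZK equation therefore reduces pointwise, independently of `x` and `y`, to `w² − w' = 0`. -/

theorem zk_mul_iff (w : ℝ → ℝ) (t x y : ℝ) :
    ZK (fun t x _ => x * w t) t x y ↔ w t ^ 2 - deriv w t = 0 := by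
  have h_xt : deriv (fun x' => deriv (fun t' => x' * w t') t) x = deriv w t := by
    simp only [deriv_const_mul_field']
    simp
  have h_flux : deriv (fun x' => x' * w t * deriv (fun x'' => x'' * w t) x') x = w t ^ 2 := by
    simp only [deriv_mul_const_field', deriv_id'', one_mul]
    simp [sq]
  simp only [ZK, h_xt, h_flux, deriv_const, sub_zero]
  rw [sub_eq_zero, sub_eq_zero, eq_comm]

theorem reduction_L211_general (w : ℝ → ℝ) :
    (∀ t x y : ℝ, ZK (fun t x _ => x * w t) t x y) ↔
      (∀ t : ℝ, (w t) ^ 2 - deriv w t = 0) := by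
  simp only [zk_mul_iff]
  exact ⟨fun h t => h t 0 0, fun h t _ _ => h t⟩

theorem reduction_L211 (w : ℝ → ℝ) (hw : ContDiff ℝ 2 w) :
    (∀ t x y : ℝ, ZK (fun t x _ => x * w t) t x y) ↔
      (∀ t : ℝ, (w t) ^ 2 - deriv w t = 0) :=
  reduction_L211_general w
end

section
/- Let α ≠ 0 and β be real constants and let w : ℝ → ℝ be an arbitrary differentiable function. Then u(t,x,y) = α(w(t) − x/(αt + β)) satisfies the ZK equation u_{xt} − (u u_x)_x − u_{yy} = 0 at all points with αt + β ≠ 0. -/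
/-! For `u = p(t) x + q(t)` one has `u_{xt} = p'`, `(u u_x)_x = u_x² = p²` and `u_{yy} = 0`,
so `u` solves ZK exactly when `p` solves the Riccati equation `p' = p²`. The solution
`α (w(t) − x/(αt + β))` has `p = −α/(αt + β)`, and `p' = α²/(αt + β)² = p²`. -/

theorem zk_affine_in_x_iff {p q : ℝ → ℝ} {t : ℝ} (hp : DifferentiableAt ℝ p t)
    (hq : DifferentiableAt ℝ q t) (x y : ℝ) :
    ZK (fun t x _ => p t * x + q t) t x y ↔ deriv p t = p t ^ 2 := by
  have h_t : ∀ x' : ℝ, deriv (fun t' => p t' * x' + q t') t = deriv p t * x' + deriv q t :=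
    fun x' => ((hp.hasDerivAt.mul_const x').add hq.hasDerivAt).deriv
  have h_x : ∀ x' : ℝ, deriv (fun x'' => p t * x'' + q t) x' = p t :=
    fun x' => by simp
  have h_xt : deriv (fun x' => deriv p t * x' + deriv q t) x = deriv p t := by
    simp
  have h_flux : deriv (fun x' => (p t * x' + q t) * p t) x = p t ^ 2 := by
    simp [sq]
  simp only [ZK, h_t, h_x, h_xt, h_flux, deriv_const, sub_zero, sub_eq_zero]

theorem hasDerivAt_neg_div_affine {α β t : ℝ} (hc : α * t + β ≠ 0) :
    HasDerivAt (fun t => -α / (α * t + β)) ((-α / (α * t + β)) ^ 2) t := by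
  have h_lin : HasDerivAt (fun t => α * t + β) α t := by
    simpa using ((hasDerivAt_id t).const_mul α).add_const β
  exact ((hasDerivAt_const t (-α)).fun_div h_lin hc).congr_deriv (by rw [div_pow]; ring)

theorem solution_L26_general (α β : ℝ) (w : ℝ → ℝ) (hw : Differentiable ℝ w) :
    ∀ t x y : ℝ, α * t + β ≠ 0 →
      ZK (fun t x _ => α * (w t - x / (α * t + β))) t x y := by
  intro t x y hc
  have h_affine : (fun t x (_ : ℝ) => α * (w t - x / (α * t + β)))
      = fun t x _ => -α / (α * t + β) * x + α * w t := by
    funext t x _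
    ring
  have hp := hasDerivAt_neg_div_affine hc
  rw [h_affine, zk_affine_in_x_iff hp.differentiableAt ((hw t).const_mul α)]
  exact hp.deriv

theorem solution_L26 (α β : ℝ) (hα : α ≠ 0) (w : ℝ → ℝ) (hw : Differentiable ℝ w) :
    ∀ t x y : ℝ, α * t + β ≠ 0 →
      ZK (fun t x _ => α * (w t - x / (α * t + β))) t x y :=
  solution_L26_general α β w hw
end
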